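/- arXiv:1811.04763 — 7 statements merged into one kernel-verified Lean document; each statement's English description precedes it below -/
import Mathlib

section
/- For C ≥ 2, ρ₁ < C, and 0 < ρ₂ < C, the function Φ(z) = (1/z)·(ρ₁+ρ₂z)^C/C! − Σ_{m=0}^{C−1} (ρ₁+ρ₂z)^m/m! has exactly one root z > 0. -/
/-!
Write `C = n + 1`, `v = ρ₁ + ρ₂ z` and `S(v) = ∑_{m ≤ n} v^m / m!`. For `z > 0`, `Φ z = 0` says
exactly that `g(v) = C z`, where `g(v) = v^C / (n! S(v))` is `expTailRatio n v`. It satisfies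
`0 < g(v) ≤ v` and `g' ≤ 1` for `v ≥ 0`, so `z ↦ C z - g(ρ₁ + ρ₂ z)` increases at rate at least
`C - ρ₂ > 0`; it is negative at `0` and nonnegative at `ρ₁ / (C - ρ₂)`, hence has exactly one
positive zero.

The bound `g' ≤ 1` amounts to `(v^n/n!) ∑_{m ≤ n} (C - m) v^m/m! ≤ S(v)²`, which follows from the
log-concavity of `m ↦ v^m/m!` by matching each of the `C - m` copies of the term indexed by `m`
with a distinct product `(v^j/j!) (v^(n+m-j)/(n+m-j)!)`, `m ≤ j ≤ n`, of the expansion of `S(v)²`.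
-/

open Finset Nat

theorem factorial_mul_factorial_le {m j n : ℕ} (hmj : m ≤ j) (hjn : j ≤ n) :
    j ! * (n + m - j)! ≤ n ! * m ! := by
  have hn : j ! * n.descFactorial (n - j) = n ! := by
    have := Nat.factorial_mul_descFactorial (n := n) (k := n - j) (Nat.sub_le n j)
    rwa [Nat.sub_sub_self hjn] at this
  have hnm : m ! * (n + m - j).descFactorial (n - j) = (n + m - j)! := by
    have := Nat.factorial_mul_descFactorial (n := n + m - j) (k := n - j) (by omega)
    rwa [show n + m - j - (n - j) = m by omega] at this
  calc j ! * (n + m - j)! = j ! * (n + m - j).descFactorial (n - j) * m ! := by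
        rw [← hnm]; ring
    _ ≤ j ! * n.descFactorial (n - j) * m ! := by
        gcongr
        omega
    _ = n ! * m ! := by rw [hn]

theorem pow_div_factorial_mul_le {v : ℝ} (hv : 0 ≤ v) {m j n : ℕ} (hmj : m ≤ j) (hjn : j ≤ n) :
    v ^ n / n ! * (v ^ m / m !) ≤ v ^ j / j ! * (v ^ (n + m - j) / (n + m - j)!) := by
  rw [_root_.div_mul_div_comm, _root_.div_mul_div_comm, ← pow_add, ← pow_add,
    show j + (n + m - j) = n + m by omega]
  exact div_le_div_of_nonneg_left (by positivity) (by positivity)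
    (by exact_mod_cast factorial_mul_factorial_le hmj hjn)

theorem sum_sub_mul_le_sq_sum {f : ℕ → ℝ} {n : ℕ} (hf : ∀ m, 0 ≤ f m)
    (hlc : ∀ m j, m ≤ j → j ≤ n → f n * f m ≤ f j * f (n + m - j)) :
    ∑ m ∈ range (n + 1), ((n + 1 - m : ℕ) : ℝ) * (f n * f m) ≤
      (∑ m ∈ range (n + 1), f m) ^ 2 := by
  set S := ∑ m ∈ range (n + 1), f m
  have htail : ∀ j ∈ Ico 0 (n + 1), ∑ m ∈ Ico 0 (j + 1), f (n + m - j) ≤ S := by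
    intro j hj
    rw [mem_Ico] at hj
    calc ∑ m ∈ Ico 0 (j + 1), f (n + m - j) = ∑ l ∈ Ico (n - j) (n + 1), f l := by
          rw [sum_Ico_eq_sum_range, sum_Ico_eq_sum_range, show n + 1 - (n - j) = j + 1 by omega]
          exact sum_congr rfl fun m _ => by congr 1; omega
      _ ≤ S := sum_le_sum_of_subset_of_nonneg
          (by intro l; simp only [mem_Ico, mem_range]; omega) fun l _ _ => hf l
  calc ∑ m ∈ range (n + 1), ((n + 1 - m : ℕ) : ℝ) * (f n * f m)
      = ∑ m ∈ Ico 0 (n + 1), ∑ j ∈ Ico m (n + 1), f n * f m := by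
        rw [range_eq_Ico]
        exact sum_congr rfl fun m _ => by rw [sum_const, card_Ico, nsmul_eq_mul]
    _ ≤ ∑ m ∈ Ico 0 (n + 1), ∑ j ∈ Ico m (n + 1), f j * f (n + m - j) := by
        refine sum_le_sum fun m _ => sum_le_sum fun j hj => ?_
        rw [mem_Ico] at hj
        exact hlc m j hj.1 (by omega)
    _ = ∑ j ∈ Ico 0 (n + 1), f j * ∑ m ∈ Ico 0 (j + 1), f (n + m - j) := by
        rw [sum_Ico_Ico_comm]; simp only [mul_sum]
    _ ≤ ∑ j ∈ Ico 0 (n + 1), f j * S :=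
        sum_le_sum fun j hj => mul_le_mul_of_nonneg_left (htail j hj) (hf j)
    _ = S ^ 2 := by rw [← sum_mul, ← range_eq_Ico, sq]

noncomputable def expPartialSum (n : ℕ) (v : ℝ) : ℝ := ∑ m ∈ range n, v ^ m / m !

noncomputable def expTailRatio (n : ℕ) (v : ℝ) : ℝ :=
  v ^ (n + 1) / n ! / expPartialSum (n + 1) v

theorem expPartialSum_succ (n : ℕ) (v : ℝ) :
    expPartialSum (n + 1) v = expPartialSum n v + v ^ n / n ! :=
  sum_range_succ _ _

theorem pow_div_factorial_le_expPartialSum {v : ℝ} (hv : 0 ≤ v) (n : ℕ) :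
    v ^ n / n ! ≤ expPartialSum (n + 1) v :=
  single_le_sum (f := fun m => v ^ m / (m ! : ℝ)) (fun _ _ => by positivity)
    (self_mem_range_succ n)

theorem expPartialSum_pos {v : ℝ} (hv : 0 ≤ v) (n : ℕ) : 0 < expPartialSum (n + 1) v :=
  sum_pos' (fun _ _ => by positivity) ⟨0, by simp⟩

theorem hasDerivAt_expPartialSum_succ (n : ℕ) (v : ℝ) :
    HasDerivAt (expPartialSum (n + 1)) (expPartialSum n v) v := by
  induction n with
  | zero =>
    have h : expPartialSum 1 = fun _ => 1 := by funext; simp [expPartialSum]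
    simpa [h, expPartialSum] using hasDerivAt_const v (1 : ℝ)
  | succ n ih =>
    have hterm : HasDerivAt (fun x : ℝ => x ^ (n + 1) / (n + 1)!) (v ^ n / n !) v := by
      refine ((hasDerivAt_pow (n + 1) v).div_const _).congr_deriv ?_
      push_cast [Nat.factorial_succ, Nat.add_sub_cancel]
      field_simp
    rw [expPartialSum_succ n]
    exact (ih.add hterm).congr_of_eventuallyEq
      (Filter.Eventually.of_forall fun x => expPartialSum_succ (n + 1) x)

theorem sum_range_succ_mul_pow_div_factorial (n : ℕ) (v : ℝ) :
    ∑ m ∈ range (n + 1), (m : ℝ) * (v ^ m / m !) = v * expPartialSum n v := by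
  induction n with
  | zero => simp [expPartialSum]
  | succ n ih =>
    rw [sum_range_succ, ih, expPartialSum_succ, factorial_succ, pow_succ]
    push_cast
    field_simp

theorem hasDerivAt_expTailRatio (n : ℕ) {v : ℝ} (hv : 0 ≤ v) :
    HasDerivAt (expTailRatio n)
      (((n + 1) * (v ^ n / n !) * expPartialSum (n + 1) v
          - v ^ (n + 1) / n ! * expPartialSum n v) / expPartialSum (n + 1) v ^ 2) v := by
  have hnum : HasDerivAt (fun x : ℝ => x ^ (n + 1) / n !) ((n + 1) * (v ^ n / n !)) v := by
    refine ((hasDerivAt_pow (n + 1) v).div_const _).congr_deriv ?_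
    push_cast [Nat.add_sub_cancel]
    ring
  exact hnum.div (hasDerivAt_expPartialSum_succ n v) (expPartialSum_pos hv n).ne'

theorem expTailRatio_deriv_numerator_le {v : ℝ} (hv : 0 ≤ v) (n : ℕ) :
    (n + 1) * (v ^ n / n !) * expPartialSum (n + 1) v - v ^ (n + 1) / n ! * expPartialSum n v
      ≤ expPartialSum (n + 1) v ^ 2 := by
  have hsum : (n + 1) * (v ^ n / n !) * expPartialSum (n + 1) v
      - v ^ (n + 1) / n ! * expPartialSum n v
      = ∑ m ∈ range (n + 1), ((n + 1 - m : ℕ) : ℝ) * (v ^ n / n ! * (v ^ m / m !)) := by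
    rw [show v ^ (n + 1) / n ! * expPartialSum n v = v ^ n / n ! * (v * expPartialSum n v) by
      rw [pow_succ]; ring, ← sum_range_succ_mul_pow_div_factorial, expPartialSum, mul_sum,
      mul_sum, ← sum_sub_distrib]
    refine sum_congr rfl fun m hm => ?_
    rw [Nat.cast_sub (by simp at hm; omega)]
    push_cast
    ring
  rw [hsum]
  exact sum_sub_mul_le_sq_sum (f := fun m => v ^ m / m !) (fun m => by positivity)
    fun m j hmj hjn => pow_div_factorial_mul_le hv hmj hjn

theorem expTailRatio_pos (n : ℕ) {v : ℝ} (hv : 0 < v) : 0 < expTailRatio n v :=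
  div_pos (by positivity) (expPartialSum_pos hv.le n)

theorem expTailRatio_le_self (n : ℕ) {v : ℝ} (hv : 0 ≤ v) : expTailRatio n v ≤ v := by
  rw [expTailRatio, _root_.pow_succ', mul_div_assoc, mul_div_assoc]
  exact mul_le_of_le_one_right hv
    (div_le_one_of_le₀ (pow_div_factorial_le_expPartialSum hv n) (expPartialSum_pos hv n).le)

theorem expTailRatio_sub_le (n : ℕ) {v w : ℝ} (hv : 0 ≤ v) (hvw : v ≤ w) :
    expTailRatio n w - expTailRatio n v ≤ w - v := by
  have hd := fun x (hx : x ∈ Set.Ici (0 : ℝ)) => hasDerivAt_expTailRatio n hx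
  simpa using (convex_Ici 0).image_sub_le_mul_sub_of_deriv_le (C := 1)
    (fun x hx => (hd x hx).continuousAt.continuousWithinAt)
    (fun x hx => (hd x (interior_subset hx)).differentiableAt.differentiableWithinAt)
    (fun x hx => by
      have hx : 0 ≤ x := interior_subset hx
      rw [(hd x hx).deriv]
      exact div_le_one_of_le₀ (expTailRatio_deriv_numerator_le hx n) (sq_nonneg _))
    v hv w (hv.trans hvw) hvw

theorem existsUnique_expTailRatio_eq {n : ℕ} {ρ₁ ρ₂ : ℝ} (hρ₁ : 0 < ρ₁) (hρ₂ : 0 < ρ₂)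
    (hρ₂n : ρ₂ < n + 1) :
    ∃! z : ℝ, 0 < z ∧ expTailRatio n (ρ₁ + ρ₂ * z) = (n + 1) * z := by
  set F : ℝ → ℝ := fun z => (n + 1) * z - expTailRatio n (ρ₁ + ρ₂ * z)
  have hv : ∀ z : ℝ, 0 ≤ z → 0 ≤ ρ₁ + ρ₂ * z := fun z hz => by positivity
  have hmono : StrictMonoOn F (Set.Ici 0) := by
    intro a ha b _ hab
    have := expTailRatio_sub_le n (hv a ha)
      (by gcongr : ρ₁ + ρ₂ * a ≤ ρ₁ + ρ₂ * b)
    simp only [F]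
    nlinarith
  have hcont : ContinuousOn F (Set.Ici 0) := fun z hz =>
    ((continuousAt_const.mul continuousAt_id).sub
      ((hasDerivAt_expTailRatio n (hv z hz)).continuousAt.comp (f := fun z => ρ₁ + ρ₂ * z)
        (by fun_prop : ContinuousAt (fun z => ρ₁ + ρ₂ * z) z))).continuousWithinAt
  set z₁ := ρ₁ / (n + 1 - ρ₂)
  have hz₁ : 0 ≤ z₁ := div_nonneg hρ₁.le (by linarith)
  have hF0 : F 0 < 0 := by simp [F, expTailRatio_pos n hρ₁]
  have hFz₁ : 0 ≤ F z₁ := by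
    have hle := expTailRatio_le_self n (hv z₁ hz₁)
    have hz₁eq : (n + 1 - ρ₂) * z₁ = ρ₁ := mul_div_cancel₀ _ (by linarith)
    simp only [F]
    linarith
  obtain ⟨z, hz, hFz⟩ := intermediate_value_Icc hz₁ (hcont.mono Set.Icc_subset_Ici_self)
    ⟨hF0.le, hFz₁⟩
  have hzpos : 0 < z := lt_of_le_of_ne hz.1 (by rintro rfl; linarith)
  refine ⟨z, ⟨hzpos, by simp only [F] at hFz; linarith⟩, fun y ⟨hy, hgy⟩ => ?_⟩
  exact hmono.injOn hy.le hz.1 (by simp only [F]; linarith)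

open Real Set in
theorem stmt_2_general (C : ℕ) (ρ₁ ρ₂ : ℝ) (hρ₁ : 0 < ρ₁)
    (hρ₂ : 0 < ρ₂) (hρ₂C : ρ₂ < C)
    (Φ : ℝ → ℝ)
    (hΦ : ∀ z : ℝ, Φ z = (1 / z) * (ρ₁ + ρ₂ * z) ^ C / (Nat.factorial C : ℝ)
        - ∑ m ∈ Finset.range C, (ρ₁ + ρ₂ * z) ^ m / (Nat.factorial m : ℝ)) :
    ∃! z : ℝ, 0 < z ∧ Φ z = 0 := by
  obtain ⟨n, rfl⟩ : ∃ n, C = n + 1 :=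
    Nat.exists_eq_succ_of_ne_zero (by rintro rfl; simp at hρ₂C; linarith)
  have hroot : ∀ z, 0 < z → (Φ z = 0 ↔ expTailRatio n (ρ₁ + ρ₂ * z) = (n + 1) * z) := by
    intro z hz
    have hP := expPartialSum_pos (by positivity : 0 ≤ ρ₁ + ρ₂ * z) n
    rw [hΦ, expTailRatio, ← expPartialSum, sub_eq_zero, div_eq_iff hP.ne', factorial_succ]
    push_cast
    constructor <;> intro h <;> field_simp at h ⊢ <;> linarith
  push_cast at hρ₂C
  obtain ⟨z, ⟨hz, hgz⟩, huniq⟩ := existsUnique_expTailRatio_eq hρ₁ hρ₂ hρ₂C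
  exact ⟨z, ⟨hz, (hroot z hz).2 hgz⟩, fun y ⟨hy, hΦy⟩ => huniq y ⟨hy, (hroot y hy).1 hΦy⟩⟩

theorem stmt_2 (C : ℕ) (hC : 2 ≤ C) (ρ₁ ρ₂ : ℝ) (hρ₁ : 0 < ρ₁) (hρ₁C : ρ₁ < C)
    (hρ₂ : 0 < ρ₂) (hρ₂C : ρ₂ < C)
    (Φ : ℝ → ℝ)
    (hΦ : ∀ z : ℝ, Φ z = (1 / z) * (ρ₁ + ρ₂ * z) ^ C / (Nat.factorial C : ℝ)
        - ∑ m ∈ Finset.range C, (ρ₁ + ρ₂ * z) ^ m / (Nat.factorial m : ℝ)) :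
    ∃! z : ℝ, 0 < z ∧ Φ z = 0 :=
  stmt_2_general C ρ₁ ρ₂ hρ₁ hρ₂ hρ₂C Φ hΦ
end

section
/- For C ≥ 2 and 0 < ρ₁ < C−1, the function Φ(z) = (1/z)·(ρ₁+Cz)^C/C! − Σ_{m=0}^{C−1} (ρ₁+Cz)^m/m! (critical case ρ₂ = C) has exactly one root z > 0. -/
open Real Set

/-!
Put `x = ρ₁ + C z`. Then `C z Φ(z) = -H(x)` with `H = criticalPoly ρ₁ C`, that is
`H(x) = ∑_{m<C} (m - ρ₁)/m! xᵐ`, because `∑_{m<C} (x - m) xᵐ/m!` telescopes to `C x^C/C!`.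
Now `H(ρ₁) = -C ρ₁^C/C! < 0` and the leading coefficient of `H` is positive, so `H` has a root
`x > ρ₁`. It is the only positive root: `x^{-ρ₁} H(x) = ∑ (m - ρ₁)/m! x^{m - ρ₁}` is strictly
increasing on `(0, ∞)`, since every coefficient has the sign of its exponent.
-/

open Finset Filter Topology

theorem mul_rpow_le_mul_rpow {a e x y : ℝ} (hae : 0 ≤ a * e) (hx : 0 < x) (hxy : x ≤ y) :
    a * x ^ e ≤ a * y ^ e := by
  rcases lt_trichotomy e 0 with he | rfl | he
  · have ha : a ≤ 0 := nonpos_of_mul_nonneg_left hae he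
    exact mul_le_mul_of_nonpos_left (rpow_le_rpow_of_nonpos hx hxy he.le) ha
  · simp
  · have ha : 0 ≤ a := nonneg_of_mul_nonneg_left hae he
    exact mul_le_mul_of_nonneg_left (rpow_le_rpow hx.le hxy he.le) ha

theorem mul_rpow_lt_mul_rpow {a e x y : ℝ} (hae : 0 < a * e) (hx : 0 < x) (hxy : x < y) :
    a * x ^ e < a * y ^ e := by
  rcases lt_or_gt_of_ne (right_ne_zero_of_mul hae.ne') with he | he
  · exact mul_lt_mul_of_neg_left (rpow_lt_rpow_of_neg hx hxy he) (neg_of_mul_pos_left hae he.le)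
  · exact mul_lt_mul_of_pos_left (rpow_lt_rpow hx.le hxy he) (pos_of_mul_pos_left hae he.le)

theorem strictMonoOn_sum_mul_rpow {ι : Type*} {s : Finset ι} {a e : ι → ℝ}
    (hs : ∀ i ∈ s, 0 ≤ a i * e i) (hpos : ∃ i ∈ s, 0 < a i * e i) :
    StrictMonoOn (fun x => ∑ i ∈ s, a i * x ^ e i) (Ioi 0) := by
  intro x hx y _ hxy
  obtain ⟨j, hj, hje⟩ := hpos
  exact sum_lt_sum (fun i hi => mul_rpow_le_mul_rpow (hs i hi) hx hxy.le)
    ⟨j, hj, mul_rpow_lt_mul_rpow hje hx hxy⟩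

theorem tendsto_sum_mul_pow_div_pow_atTop (a : ℕ → ℝ) (n : ℕ) :
    Tendsto (fun x : ℝ => (∑ m ∈ range (n + 1), a m * x ^ m) / x ^ n) atTop (𝓝 (a n)) := by
  have hlim : Tendsto (fun x : ℝ => ∑ m ∈ range (n + 1), a m * x⁻¹ ^ (n - m)) atTop
      (𝓝 (∑ m ∈ range (n + 1), a m * 0 ^ (n - m))) :=
    tendsto_finsetSum _ fun m _ => (tendsto_inv_atTop_zero.pow _).const_mul _
  have hval : ∑ m ∈ range (n + 1), a m * (0 : ℝ) ^ (n - m) = a n := by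
    rw [sum_range_succ, Nat.sub_self, pow_zero, mul_one, add_eq_right]
    exact sum_eq_zero fun m hm => by
      rw [zero_pow (Nat.sub_ne_zero_of_lt (mem_range.1 hm)), mul_zero]
  rw [hval] at hlim
  refine hlim.congr' ?_
  filter_upwards [eventually_gt_atTop 0] with x hx
  rw [sum_div]
  refine sum_congr rfl fun m hm => ?_
  have hmn : m + (n - m) = n := Nat.add_sub_cancel' (Nat.lt_succ_iff.1 (mem_range.1 hm))
  rw [← hmn, pow_add, inv_pow]
  field_simp
  rw [hmn]

theorem eventually_sum_mul_pow_pos {a : ℕ → ℝ} {n : ℕ} (hn : 0 < a n) :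
    ∀ᶠ x : ℝ in atTop, 0 < ∑ m ∈ range (n + 1), a m * x ^ m := by
  filter_upwards [(tendsto_sum_mul_pow_div_pow_atTop a n).eventually_const_lt hn,
    eventually_gt_atTop 0] with x hx hx0
  exact (div_pos_iff_of_pos_right (pow_pos hx0 n)).1 hx

theorem sum_range_sub_mul_pow_div_factorial {K : Type*} [Field K] [CharZero K] (x : K) (C : ℕ) :
    ∑ m ∈ range C, (x - m) * x ^ m / m.factorial = C * x ^ C / C.factorial := by
  have hstep : ∀ m : ℕ, ((m + 1 : ℕ) : K) * x ^ (m + 1) / (m + 1).factorial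
      - m * x ^ m / m.factorial = (x - m) * x ^ m / m.factorial := by
    intro m
    have := Nat.cast_ne_zero (R := K) |>.2 m.factorial_ne_zero
    rw [Nat.factorial_succ]
    push_cast
    field_simp
    ring
  simp_rw [← hstep]
  rw [sum_range_sub (fun k : ℕ => (k : K) * x ^ k / k.factorial)]
  simp

noncomputable def criticalPoly (ρ : ℝ) (C : ℕ) (x : ℝ) : ℝ :=
  ∑ m ∈ range C, ((m : ℝ) - ρ) / m.factorial * x ^ m

theorem continuous_criticalPoly (ρ : ℝ) (C : ℕ) : Continuous (criticalPoly ρ C) := by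
  unfold criticalPoly
  fun_prop

theorem criticalPoly_eq (ρ x : ℝ) (C : ℕ) :
    criticalPoly ρ C x
      = (x - ρ) * ∑ m ∈ range C, x ^ m / m.factorial - C * x ^ C / C.factorial := by
  rw [← sum_range_sub_mul_pow_div_factorial, mul_sum, ← sum_sub_distrib, criticalPoly]
  exact sum_congr rfl fun m _ => by ring

theorem criticalPoly_self_neg {ρ : ℝ} (hρ : 0 < ρ) {C : ℕ} (hC : 0 < C) :
    criticalPoly ρ C ρ < 0 := by
  rw [criticalPoly_eq, sub_self, zero_mul, zero_sub, neg_lt_zero]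
  positivity

theorem exists_gt_criticalPoly_pos {ρ : ℝ} {C : ℕ} (hC : 0 < C) (hρC : ρ < C - 1) :
    ∃ X > ρ, 0 < criticalPoly ρ C X := by
  obtain ⟨n, rfl⟩ := Nat.exists_eq_add_one_of_ne_zero hC.ne'
  have hlead : 0 < ((n : ℝ) - ρ) / n.factorial := by
    push_cast at hρC
    exact div_pos (by linarith) (by positivity)
  exact ((eventually_sum_mul_pow_pos hlead).and (eventually_gt_atTop ρ)).exists.imp
    fun X hX => ⟨hX.2, hX.1⟩

theorem criticalPoly_div_rpow {ρ x : ℝ} (C : ℕ) (hx : 0 < x) :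
    criticalPoly ρ C x / x ^ ρ
      = ∑ m ∈ range C, ((m : ℝ) - ρ) / m.factorial * x ^ ((m : ℝ) - ρ) := by
  simp_rw [criticalPoly, sum_div, rpow_sub hx, rpow_natCast, mul_div_assoc]

theorem strictMonoOn_criticalPoly_div_rpow (ρ : ℝ) {C : ℕ} (hC : 2 ≤ C) :
    StrictMonoOn (fun x => criticalPoly ρ C x / x ^ ρ) (Ioi 0) := by
  have hsq (m : ℕ) :
      ((m : ℝ) - ρ) / m.factorial * ((m : ℝ) - ρ) = ((m : ℝ) - ρ) ^ 2 / m.factorial := by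
    ring
  obtain ⟨m, hm, hmρ⟩ : ∃ m < C, (m : ℝ) ≠ ρ := by
    by_cases hρ : ρ = 0
    · exact ⟨1, by omega, by simp [hρ]⟩
    · exact ⟨0, by omega, by simpa using Ne.symm hρ⟩
  refine (strictMonoOn_sum_mul_rpow (fun m _ => ?_) ⟨m, mem_range.2 hm, ?_⟩).congr
    fun x hx => (criticalPoly_div_rpow C hx).symm
  · rw [hsq]; positivity
  · rw [hsq]; exact div_pos (sq_pos_of_ne_zero (sub_ne_zero.2 hmρ)) (by positivity)

theorem mul_sub_sum_eq_neg_criticalPoly (ρ : ℝ) (C : ℕ) {z : ℝ} (hz : z ≠ 0) :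
    C * z * ((1 / z) * (ρ + C * z) ^ C / C.factorial
        - ∑ m ∈ range C, (ρ + C * z) ^ m / m.factorial)
      = -criticalPoly ρ C (ρ + C * z) := by
  rw [criticalPoly_eq, add_sub_cancel_left]
  field_simp
  ring

theorem stmt_3 (C : ℕ) (hC : 2 ≤ C) (ρ₁ : ℝ) (hρ₁ : 0 < ρ₁) (hρ₁C : ρ₁ < (C : ℝ) - 1)
    (Φ : ℝ → ℝ)
    (hΦ : ∀ z : ℝ, Φ z = (1 / z) * (ρ₁ + (C : ℝ) * z) ^ C / (Nat.factorial C : ℝ)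
        - ∑ m ∈ Finset.range C, (ρ₁ + (C : ℝ) * z) ^ m / (Nat.factorial m : ℝ)) :
    ∃! z : ℝ, 0 < z ∧ Φ z = 0 := by
  have hC₀ : 0 < C := by omega
  have hCpos : (0 : ℝ) < C := Nat.cast_pos.2 hC₀
  have hroot : ∀ z, 0 < z → (Φ z = 0 ↔ criticalPoly ρ₁ C (ρ₁ + C * z) = 0) := fun z hz => by
    rw [hΦ, ← neg_eq_zero (a := criticalPoly _ _ _),
      ← mul_sub_sum_eq_neg_criticalPoly ρ₁ C hz.ne', mul_eq_zero, or_iff_right (by positivity)]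
  obtain ⟨X, hρX, hX⟩ := exists_gt_criticalPoly_pos hC₀ hρ₁C
  obtain ⟨x₀, ⟨hρx₀, -⟩, hx₀⟩ := intermediate_value_Ioo hρX.le
    (continuous_criticalPoly ρ₁ C).continuousOn ⟨criticalPoly_self_neg hρ₁ hC₀, hX⟩
  have hinj := (strictMonoOn_criticalPoly_div_rpow ρ₁ hC).injOn
  have hz₀ : 0 < (x₀ - ρ₁) / C := div_pos (sub_pos.2 hρx₀) hCpos
  refine ⟨(x₀ - ρ₁) / C, ⟨hz₀, (hroot _ hz₀).2 ?_⟩, ?_⟩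
  · rwa [mul_div_cancel₀ _ hCpos.ne', add_sub_cancel]
  · rintro y ⟨hy, hΦy⟩
    have hy' : ρ₁ + C * y = x₀ := hinj (by positivity : 0 < ρ₁ + C * y) (hρ₁.trans hρx₀)
      (by simp only [(hroot y hy).1 hΦy, hx₀, zero_div])
    rw [← hy', add_sub_cancel_left, mul_div_cancel_left₀ _ hCpos.ne']
end

section
/- For C ≥ 2, ρ₂ > C and ρ₁ > C−1, the function Φ(z) = (1/z)·(ρ₁+ρ₂z)^C/C! − Σ_{m=0}^{C−1} (ρ₁+ρ₂z)^m/m! is strictly positive on (0,∞). -/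
/-!
Put `x = ρ₁ + ρ₂ z` and `C = n + 1`. The terms `(x - m) x^m / m!` telescope, so that
`∑_{m ≤ n} (x - m) x^m / m! = x^(n+1) / n!`. Each factor `x - m` is at least `x - n`, and
`x - n > (n + 1) z` because `ρ₁ > n` and `ρ₂ > n + 1`; hence `(n + 1) z · ∑_{m ≤ n} x^m / m! < x^(n+1) / n!`, which is `Φ z > 0`.
-/

open Real Set Finset

theorem sum_range_succ_sub_mul_pow_div_factorial {K : Type*} [Field K] [CharZero K]
    (x : K) (n : ℕ) :
    ∑ m ∈ range (n + 1), (x - m) * (x ^ m / m.factorial) = x ^ (n + 1) / n.factorial := by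
  induction n with
  | zero => simp
  | succ n ih =>
    rw [sum_range_succ, ih, Nat.factorial_succ]
    push_cast
    field_simp
    ring

theorem sub_mul_sum_range_pow_div_factorial_le {K : Type*} [Field K] [LinearOrder K]
    [IsStrictOrderedRing K] {x c : K} (hx : 0 ≤ x) {n : ℕ} (hn : (n : K) ≤ c) :
    (x - c) * ∑ m ∈ range (n + 1), x ^ m / m.factorial ≤ x ^ (n + 1) / n.factorial := by
  rw [← sum_range_succ_sub_mul_pow_div_factorial, mul_sum]
  refine sum_le_sum fun m hm => mul_le_mul_of_nonneg_right ?_ (by positivity)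
  have hmn : (m : K) ≤ n := by exact_mod_cast Nat.lt_succ_iff.mp (mem_range.mp hm)
  linarith

theorem stmt_5 (C : ℕ) (hC : 2 ≤ C) (ρ₁ ρ₂ : ℝ) (hρ₂ : (C : ℝ) < ρ₂)
    (hρ₁ : (C : ℝ) - 1 < ρ₁)
    (Φ : ℝ → ℝ)
    (hΦ : ∀ z : ℝ, Φ z = (1 / z) * (ρ₁ + ρ₂ * z) ^ C / (Nat.factorial C : ℝ)
        - ∑ m ∈ Finset.range C, (ρ₁ + ρ₂ * z) ^ m / (Nat.factorial m : ℝ)) :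
    ∀ z : ℝ, 0 < z → 0 < Φ z := by
  intro z hz
  obtain ⟨n, rfl⟩ := Nat.exists_eq_add_of_le' (one_le_two.trans hC)
  push_cast at hρ₁ hρ₂
  rw [hΦ z, sub_pos]
  set x := ρ₁ + ρ₂ * z
  set S := ∑ m ∈ range (n + 1), x ^ m / (m.factorial : ℝ)
  have hx : 0 < x := by nlinarith [n.cast_nonneg (α := ℝ)]
  have hgap : (n + 1) * z < x - n := by nlinarith
  have hS : 0 < S := sum_pos (fun m _ => by positivity) nonempty_range_add_one
  have hrhs : 1 / z * x ^ (n + 1) / ((n + 1).factorial : ℝ)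
      = x ^ (n + 1) / n.factorial / ((n + 1) * z) := by
    rw [Nat.factorial_succ]; push_cast; field_simp
  rw [hrhs, lt_div_iff₀ (mul_pos n.cast_add_one_pos hz)]
  calc S * ((n + 1) * z) < S * (x - n) := mul_lt_mul_of_pos_left hgap hS
    _ = (x - n) * S := mul_comm _ _
    _ ≤ x ^ (n + 1) / n.factorial := sub_mul_sum_range_pow_div_factorial_le hx.le le_rfl
end

section
/- For C = 2 and ρ₁ < 2 < ρ₂, the function 2Φ(z) = ρ₂(ρ₂−2)z² + 2(ρ₁ρ₂−ρ₁−1)z + ρ₁² has two roots on (0,∞) if and only if ρ₁ < ρ₂ − 1 − √(ρ₂(ρ₂−2)). -/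
open Real Set

/-!
Writing `P z = a z² + 2 b z + c` with `a = ρ₂(ρ₂ - 2) > 0` and `c = ρ₁² > 0`, Vieta's formulas show
that `P` has two distinct positive roots exactly when `b < 0` and `a c < b²`, i.e. when
`b + √(a c) < 0`. Here `√(a c) = ρ₁ √a`, so the condition reads `ρ₁ (ρ₂ - 1 + √a) < 1`, and
`(ρ₂ - 1 + √a)(ρ₂ - 1 - √a) = 1` turns it into `ρ₁ < ρ₂ - 1 - √a`.
-/

section Quadratic

variable {a b c : ℝ}

theorem quadratic_vieta_of_ne {x y : ℝ} (hx : a * x ^ 2 + 2 * b * x + c = 0)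
    (hy : a * y ^ 2 + 2 * b * y + c = 0) (hxy : x ≠ y) :
    a * (x + y) = -2 * b ∧ a * (x * y) = c := by
  have hsum : a * (x + y) + 2 * b = 0 := by
    have h : (a * (x + y) + 2 * b) * (x - y) = 0 := by linear_combination hx - hy
    exact (mul_eq_zero.mp h).resolve_right (sub_ne_zero.mpr hxy)
  exact ⟨by linarith, by linear_combination hsum * x - hx⟩

theorem quadratic_eq_zero_of_sq_eq (ha : a ≠ 0) {r : ℝ} (hr : r ^ 2 = b ^ 2 - a * c) :
    a * ((-b + r) / a) ^ 2 + 2 * b * ((-b + r) / a) + c = 0 := by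
  field_simp
  linear_combination hr

theorem exists_two_pos_roots_quadratic_iff (ha : 0 < a) (hc : 0 < c) :
    (∃ x y : ℝ, 0 < x ∧ 0 < y ∧ x ≠ y ∧
        a * x ^ 2 + 2 * b * x + c = 0 ∧ a * y ^ 2 + 2 * b * y + c = 0) ↔
      b + √(a * c) < 0 := by
  have hac : 0 < a * c := mul_pos ha hc
  constructor
  · rintro ⟨x, y, hx, hy, hxy, hx0, hy0⟩
    obtain ⟨hsum, hprod⟩ := quadratic_vieta_of_ne hx0 hy0 hxy
    have hb : 0 < -b := by nlinarith
    have hdisc : a * c < (-b) ^ 2 := by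
      have hd : 0 < (x - y) ^ 2 := by positivity [sub_ne_zero.mpr hxy]
      nlinarith [mul_pos (mul_pos ha ha) hd]
    linarith [(Real.sqrt_lt' hb).mpr hdisc]
  · intro h
    set r := √(b ^ 2 - a * c)
    have hb : 0 < -b := by linarith [Real.sqrt_pos.mpr hac]
    have hdisc : a * c < b ^ 2 := by
      simpa using (Real.sqrt_lt' hb).mp (by linarith)
    have hr : 0 < r := Real.sqrt_pos.mpr (by linarith)
    have hr2 : r ^ 2 = b ^ 2 - a * c := Real.sq_sqrt (by linarith)
    have hrb : r < -b := by
      rw [← Real.sqrt_sq hb.le, neg_sq]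
      exact Real.sqrt_lt_sqrt (by linarith) (by linarith)
    refine ⟨(-b + r) / a, (-b + -r) / a, div_pos (by linarith) ha,
      div_pos (by linarith) ha, ?_, quadratic_eq_zero_of_sq_eq ha.ne' hr2,
      quadratic_eq_zero_of_sq_eq ha.ne' (by rw [neg_sq, hr2])⟩
    rw [Ne, div_left_inj' ha.ne']
    linarith

end Quadratic

theorem stmt_7_general (ρ₁ ρ₂ : ℝ) (hρ₁ : 0 < ρ₁) (h2 : 2 < ρ₂)
    (P : ℝ → ℝ)
    (hP : ∀ z : ℝ, P z = ρ₂ * (ρ₂ - 2) * z ^ 2 + 2 * (ρ₁ * ρ₂ - ρ₁ - 1) * z + ρ₁ ^ 2) :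
    (∃ z₁ z₂ : ℝ, 0 < z₁ ∧ 0 < z₂ ∧ z₁ ≠ z₂ ∧ P z₁ = 0 ∧ P z₂ = 0) ↔
      ρ₁ < ρ₂ - 1 - Real.sqrt (ρ₂ * (ρ₂ - 2)) := by
  have ha : 0 < ρ₂ * (ρ₂ - 2) := by nlinarith
  simp only [hP]
  rw [exists_two_pos_roots_quadratic_iff ha (pow_pos hρ₁ 2),
    Real.sqrt_mul ha.le, Real.sqrt_sq hρ₁.le]
  set s := √(ρ₂ * (ρ₂ - 2))
  have hs2 : s ^ 2 = ρ₂ * (ρ₂ - 2) := Real.sq_sqrt ha.le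
  have hu : 0 < ρ₂ - 1 + s := by linarith [Real.sqrt_nonneg (ρ₂ * (ρ₂ - 2))]
  have huv : (ρ₂ - 1 + s) * (ρ₂ - 1 - s) = 1 := by linear_combination -hs2
  calc ρ₁ * ρ₂ - ρ₁ - 1 + s * ρ₁ < 0 ↔ (ρ₂ - 1 + s) * ρ₁ < (ρ₂ - 1 + s) * (ρ₂ - 1 - s) := by
        rw [huv]; constructor <;> intro h <;> linarith
    _ ↔ ρ₁ < ρ₂ - 1 - s := mul_lt_mul_iff_right₀ hu

theorem stmt_7 (ρ₁ ρ₂ : ℝ) (hρ₁ : 0 < ρ₁) (h12 : ρ₁ < 2) (h2 : 2 < ρ₂)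
    (P : ℝ → ℝ)
    (hP : ∀ z : ℝ, P z = ρ₂ * (ρ₂ - 2) * z ^ 2 + 2 * (ρ₁ * ρ₂ - ρ₁ - 1) * z + ρ₁ ^ 2) :
    (∃ z₁ z₂ : ℝ, 0 < z₁ ∧ 0 < z₂ ∧ z₁ ≠ z₂ ∧ P z₁ = 0 ∧ P z₂ = 0) ↔
      ρ₁ < ρ₂ - 1 - Real.sqrt (ρ₂ * (ρ₂ - 2)) :=
  stmt_7_general ρ₁ ρ₂ hρ₁ h2 P hP
end

section
/- Let a ≥ 1, ν ≥ 1, h(z) = 1 + a z(1−z). Define Ψ̄(z) = (ν(1−z)h(z) − 1)/(ν h(z) − 1) for z ∈ [0,1]. Then Ψ̄′(z) ≤ −ν(ν−1)/(ν(1 + a/4) − 1)² for all z ∈ [0,1]; in particular if ν > 1, Ψ̄ is strictly decreasing on [0,1]. -/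
/-!
By the quotient rule, `Ψ̄' = ν (z h' - (ν h - 1) h) / (ν h - 1)²`, and the numerator factor equals
`-(ν - 1) h² - (a z² + (a z (1 - z))²) ≤ -(ν - 1)` because `h ≥ 1` on `[0, 1]`. Together with
`0 < ν h - 1 ≤ ν (1 + a / 4) - 1` this gives the bound whenever the denominator does not vanish.

The denominator vanishes only for `ν = 1` at `z = 0` and `z = 1`, where `Ψ̄` takes the junk value
`0`. At `z = 1` the numerator is `-1`, so `Ψ̄` has a pole there and `deriv` returns `0`. At `z = 0`,
`Ψ̄` agrees off `0` with `(a (1 - z)² - 1) / (a (1 - z))`, whose derivative there is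
`-(1 + 1 / a)`, so `deriv` returns either that value or `0`.
-/

open Set Filter Topology

theorem deriv_nonpos_of_eventuallyEq_nhdsNE {f g : ℝ → ℝ} {g' x : ℝ} (hfg : f =ᶠ[𝓝[≠] x] g)
    (hg : HasDerivAt g g' x) (hg' : g' ≤ 0) : deriv f x ≤ 0 := by
  by_cases hf : ContinuousAt f x
  · rw [((hf.eventuallyEq_nhds_iff_eventuallyEq_nhdsNE hg.continuousAt).1 hfg).deriv_eq,
      hg.deriv]
    exact hg'
  · rw [deriv_zero_of_not_differentiableAt fun hd => hf hd.continuousAt]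

theorem deriv_div_eq_zero_of_pole {𝕜 : Type*} [NontriviallyNormedField 𝕜] {f g : 𝕜 → 𝕜}
    {x : 𝕜} (hf : ContinuousAt f x) (hg : ContinuousAt g x) (hfx : f x ≠ 0) (hgx : g x = 0)
    (hg_ne : ∀ᶠ w in 𝓝[≠] x, g w ≠ 0) : deriv (fun w => f w / g w) x = 0 := by
  refine deriv_zero_of_not_differentiableAt fun hd => hfx ?_
  have hfg : (fun w => f w / g w * g w) =ᶠ[𝓝 x] f :=
    ((hd.continuousAt.mul hg).eventuallyEq_nhds_iff_eventuallyEq_nhdsNE hf).1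
      (hg_ne.mono fun w hw => div_mul_cancel₀ _ hw)
  simpa [hgx] using hfg.eq_of_nhds.symm

def hump (a z : ℝ) : ℝ := 1 + a * z * (1 - z)

noncomputable def psiBar (a ν z : ℝ) : ℝ := (ν * (1 - z) * hump a z - 1) / (ν * hump a z - 1)

theorem hasDerivAt_hump (a z : ℝ) : HasDerivAt (hump a) (a * (1 - 2 * z)) z := by
  have h := (((hasDerivAt_id' z).const_mul a).mul ((hasDerivAt_id' z).const_sub 1)).const_add 1
  exact h.congr_deriv (by ring)

theorem hasDerivAt_psiBar {a ν z : ℝ} (hQ : ν * hump a z - 1 ≠ 0) :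
    HasDerivAt (psiBar a ν)
      (ν * (z * (a * (1 - 2 * z)) - (ν * hump a z - 1) * hump a z) / (ν * hump a z - 1) ^ 2) z := by
  have hh := hasDerivAt_hump a z
  have hP : HasDerivAt (fun w => ν * (1 - w) * hump a w - 1)
      (ν * -1 * hump a z + ν * (1 - z) * (a * (1 - 2 * z))) z :=
    ((((hasDerivAt_id' z).const_sub 1).const_mul ν).mul hh).sub_const 1
  exact (hP.div ((hh.const_mul ν).sub_const 1) hQ).congr_deriv (by ring)

theorem one_le_hump {a z : ℝ} (ha : 0 ≤ a) (hz : z ∈ Icc (0 : ℝ) 1) : 1 ≤ hump a z := by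
  have := mul_nonneg (mul_nonneg ha hz.1) (sub_nonneg.2 hz.2)
  unfold hump
  linarith

theorem hump_le {a : ℝ} (ha : 0 ≤ a) (z : ℝ) : hump a z ≤ 1 + a / 4 := by
  unfold hump
  nlinarith [mul_nonneg ha (sq_nonneg (z - 1 / 2))]

theorem psiBar_numerator_le {a ν z : ℝ} (ha : 0 ≤ a) (hν : 1 ≤ ν) (hz : z ∈ Icc (0 : ℝ) 1) :
    z * (a * (1 - 2 * z)) - (ν * hump a z - 1) * hump a z ≤ -(ν - 1) := by
  have key : z * (a * (1 - 2 * z)) - (ν * hump a z - 1) * hump a z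
      = -((ν - 1) * hump a z ^ 2) - (a * z ^ 2 + (a * z * (1 - z)) ^ 2) := by
    unfold hump; ring
  have hsq : 1 ≤ hump a z ^ 2 := one_le_pow₀ (one_le_hump ha hz)
  have : 0 ≤ a * z ^ 2 + (a * z * (1 - z)) ^ 2 := by positivity
  nlinarith

theorem deriv_psiBar_le {a ν z : ℝ} (ha : 0 ≤ a) (hν : 1 ≤ ν) (hz : z ∈ Icc (0 : ℝ) 1)
    (hQ : 0 < ν * hump a z - 1) :
    deriv (psiBar a ν) z ≤ -(ν * (ν - 1)) / (ν * (1 + a / 4) - 1) ^ 2 := by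
  have hQM : ν * hump a z - 1 ≤ ν * (1 + a / 4) - 1 := by nlinarith [hump_le ha z]
  rw [(hasDerivAt_psiBar hQ.ne').deriv, neg_div]
  calc ν * (z * (a * (1 - 2 * z)) - (ν * hump a z - 1) * hump a z) / (ν * hump a z - 1) ^ 2
      ≤ -(ν * (ν - 1)) / (ν * hump a z - 1) ^ 2 := by
        gcongr
        nlinarith [psiBar_numerator_le ha hν hz]
    _ ≤ -(ν * (ν - 1) / (ν * (1 + a / 4) - 1) ^ 2) := by
        rw [neg_div, neg_le_neg_iff]
        gcongr

theorem psiBar_one_eq {a w : ℝ} (hw : w ≠ 0) :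
    psiBar a 1 w = (a * (1 - w) ^ 2 - 1) / (a * (1 - w)) := by
  unfold psiBar hump
  rw [show (1 : ℝ) * (1 - w) * (1 + a * w * (1 - w)) - 1 = w * (a * (1 - w) ^ 2 - 1) by ring,
    show (1 : ℝ) * (1 + a * w * (1 - w)) - 1 = w * (a * (1 - w)) by ring,
    mul_div_mul_left _ _ hw]

theorem deriv_psiBar_one_zero_nonpos {a : ℝ} (ha : 0 < a) : deriv (psiBar a 1) 0 ≤ 0 := by
  have hl : HasDerivAt (fun w : ℝ => 1 - w) (-1) 0 := (hasDerivAt_id 0).const_sub 1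
  have hg : HasDerivAt (fun w => (a * (1 - w) ^ 2 - 1) / (a * (1 - w))) (-(1 + a⁻¹)) 0 :=
    ((((hl.pow 2).const_mul a).sub_const 1).div (hl.const_mul a) (by simpa using ha.ne')).congr_deriv
      (by simp only [Pi.pow_apply]; field_simp; ring)
  refine deriv_nonpos_of_eventuallyEq_nhdsNE ?_ hg (neg_nonpos.2 (by positivity))
  filter_upwards [self_mem_nhdsWithin] with w hw using psiBar_one_eq hw

theorem deriv_psiBar_one_one_eq_zero {a : ℝ} (ha : a ≠ 0) : deriv (psiBar a 1) 1 = 0 := by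
  show deriv (fun w => (1 * (1 - w) * hump a w - 1) / (1 * hump a w - 1)) 1 = 0
  refine deriv_div_eq_zero_of_pole (by unfold hump; fun_prop) (by unfold hump; fun_prop)
    (by simp [hump]) (by simp [hump]) ?_
  filter_upwards [self_mem_nhdsWithin,
    nhdsWithin_le_nhds ((isOpen_ne (x := (0 : ℝ))).mem_nhds one_ne_zero)] with w hw1 hw0
  simp only [hump, one_mul, add_sub_cancel_left]
  exact mul_ne_zero (mul_ne_zero ha hw0) (sub_ne_zero.2 (Ne.symm hw1))

theorem deriv_psiBar_le_of_mem_Icc {a ν z : ℝ} (ha : 0 < a) (hν : 1 ≤ ν)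
    (hz : z ∈ Icc (0 : ℝ) 1) :
    deriv (psiBar a ν) z ≤ -(ν * (ν - 1)) / (ν * (1 + a / 4) - 1) ^ 2 := by
  rcases hν.lt_or_eq with hν | rfl
  · exact deriv_psiBar_le ha.le hν.le hz (by nlinarith [one_le_hump ha.le hz])
  simp only [sub_self, mul_zero, neg_zero, zero_div]
  rcases hz.1.eq_or_lt with rfl | hz0
  · exact deriv_psiBar_one_zero_nonpos ha
  rcases hz.2.eq_or_lt with rfl | hz1
  · exact (deriv_psiBar_one_one_eq_zero ha.ne').le
  have hQ : 0 < 1 * hump a z - 1 := by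
    have := mul_pos (mul_pos ha hz0) (sub_pos.2 hz1)
    unfold hump
    linarith
  simpa using deriv_psiBar_le ha.le le_rfl hz hQ

theorem strictAntiOn_psiBar {a ν : ℝ} (ha : 0 < a) (hν : 1 < ν) :
    StrictAntiOn (psiBar a ν) (Icc 0 1) := by
  have hQ : ∀ z ∈ Icc (0 : ℝ) 1, 0 < ν * hump a z - 1 := fun z hz => by
    nlinarith [one_le_hump ha.le hz]
  refine strictAntiOn_of_deriv_neg (convex_Icc 0 1) ?_ fun z hz => ?_
  · exact ContinuousOn.div (by unfold hump; fun_prop) (by unfold hump; fun_prop)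
      fun z hz => (hQ z hz).ne'
  rw [interior_Icc] at hz
  have hz' := Ioo_subset_Icc_self hz
  calc deriv (psiBar a ν) z ≤ -(ν * (ν - 1)) / (ν * (1 + a / 4) - 1) ^ 2 :=
        deriv_psiBar_le ha.le hν.le hz' (hQ z hz')
    _ < 0 := div_neg_of_neg_of_pos (by nlinarith) (pow_pos (by nlinarith) 2)

theorem stmt_10 (a ν : ℝ) (ha : 1 ≤ a) (hν : 1 ≤ ν)
    (h Ψ : ℝ → ℝ) (hh : ∀ z : ℝ, h z = 1 + a * z * (1 - z))
    (hΨ : ∀ z : ℝ, Ψ z = (ν * (1 - z) * h z - 1) / (ν * h z - 1)) :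
    (∀ z ∈ Icc (0 : ℝ) 1,
      deriv Ψ z ≤ -(ν * (ν - 1)) / (ν * (1 + a / 4) - 1) ^ 2) ∧
    (1 < ν → StrictAntiOn Ψ (Icc (0 : ℝ) 1)) := by
  obtain rfl : h = hump a := funext hh
  obtain rfl : Ψ = psiBar a ν := funext hΨ
  have ha0 : 0 < a := by linarith
  exact ⟨fun z hz => deriv_psiBar_le_of_mem_Icc ha0 hν hz, strictAntiOn_psiBar ha0⟩
end

section
/- Let 0 < δ < 1/2 and let C ≥ 1 be an integer. For all z with ν h(z) ≤ δ (i.e. assuming Σ-weights bounded below): Σ_{k=0}^{C} (∏_{i=0}^{k−1}(1 − i/C)) · δ^{−k} ≥ Σ_{k=0}^{⌊δC⌋} ((1−δ)/δ)^k. Consequently this sum tends to +∞ as C → ∞. -/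
open Real Filter

/-! For `k ≤ ⌊δC⌋` each factor `1 - i/C` is at least `1 - δ`, so the `k`-th term dominates
`((1 - δ)/δ)^k`, and the other terms are nonnegative. As `(1 - δ)/δ > 1` for `δ < 1/2`, the
lower bound already diverges through its last term `((1 - δ)/δ)^⌊δC⌋`. -/

theorem one_sub_pow_le_prod_one_sub_div {δ : ℝ} {C k : ℕ} (hδ0 : 0 ≤ δ) (hδ1 : δ ≤ 1)
    (hk : k ≤ ⌊δ * C⌋₊) :
    (1 - δ) ^ k ≤ ∏ i ∈ Finset.range k, (1 - (i : ℝ) / C) := by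
  rw [Finset.pow_eq_prod_const]
  refine Finset.prod_le_prod (fun _ _ => by linarith) fun i hi => ?_
  have hi : (i : ℝ) ≤ δ * C :=
    (Nat.le_floor_iff (by positivity)).1 ((Finset.mem_range.1 hi).le.trans hk)
  have : (i : ℝ) / C ≤ δ := div_le_of_le_mul₀ (Nat.cast_nonneg C) hδ0 hi
  linarith

theorem prod_one_sub_div_nonneg {C k : ℕ} (hk : k ≤ C) :
    0 ≤ ∏ i ∈ Finset.range k, (1 - (i : ℝ) / C) := by
  refine Finset.prod_nonneg fun i hi => ?_
  have hiC : (i : ℝ) ≤ C := by exact_mod_cast ((Finset.mem_range.1 hi).trans_le hk).le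
  linarith [div_le_one_of_le₀ hiC (Nat.cast_nonneg C)]

theorem sum_range_floor_pow_le_sum_prod_one_sub_div {δ : ℝ} (hδ0 : 0 < δ) (hδ1 : δ ≤ 1)
    (C : ℕ) :
    ∑ k ∈ Finset.range (⌊δ * C⌋₊ + 1), ((1 - δ) / δ) ^ k ≤
      ∑ k ∈ Finset.range (C + 1), (∏ i ∈ Finset.range k, (1 - (i : ℝ) / C)) * (1 / δ) ^ k := by
  have hfloor : ⌊δ * C⌋₊ ≤ C :=
    Nat.floor_le_of_le (by nlinarith [(Nat.cast_nonneg C : (0 : ℝ) ≤ C)])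
  calc ∑ k ∈ Finset.range (⌊δ * C⌋₊ + 1), ((1 - δ) / δ) ^ k
      ≤ ∑ k ∈ Finset.range (⌊δ * C⌋₊ + 1),
          (∏ i ∈ Finset.range k, (1 - (i : ℝ) / C)) * (1 / δ) ^ k := by
        refine Finset.sum_le_sum fun k hk => ?_
        rw [div_eq_mul_one_div, mul_pow]
        gcongr
        exact one_sub_pow_le_prod_one_sub_div hδ0.le hδ1 (Nat.lt_succ_iff.1 (Finset.mem_range.1 hk))
    _ ≤ _ := by
        refine Finset.sum_le_sum_of_subset_of_nonneg
          (Finset.range_subset_range.2 (Nat.succ_le_succ hfloor)) fun k hk _ => ?_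
        exact mul_nonneg (prod_one_sub_div_nonneg (Nat.lt_succ_iff.1 (Finset.mem_range.1 hk)))
          (by positivity)

theorem tendsto_sum_range_floor_pow_atTop {δ r : ℝ} (hδ0 : 0 < δ) (hr : 1 < r) :
    Tendsto (fun C : ℕ => ∑ k ∈ Finset.range (⌊δ * C⌋₊ + 1), r ^ k) atTop atTop := by
  have hpow : Tendsto (fun C : ℕ => r ^ ⌊δ * C⌋₊) atTop atTop :=
    (tendsto_pow_atTop_atTop_of_one_lt hr).comp <| tendsto_nat_floor_atTop.comp <|
      tendsto_natCast_atTop_atTop.const_mul_atTop hδ0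
  refine tendsto_atTop_mono (fun C => ?_) hpow
  exact Finset.single_le_sum (f := fun k => r ^ k) (fun k _ => pow_nonneg (by linarith) k)
    (Finset.self_mem_range_succ _)

theorem stmt_13 (δ : ℝ) (hδ0 : 0 < δ) (hδ : δ < 1 / 2)
    (S : ℕ → ℝ)
    (hS : ∀ C : ℕ, S C = ∑ k ∈ Finset.range (C + 1),
        (∏ i ∈ Finset.range k, (1 - (i : ℝ) / C)) * (1 / δ) ^ k) :
    (∀ C : ℕ, 1 ≤ C →
      ∑ k ∈ Finset.range (⌊δ * C⌋₊ + 1), ((1 - δ) / δ) ^ k ≤ S C) ∧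
    Tendsto S atTop atTop := by
  have hbound : ∀ C : ℕ, ∑ k ∈ Finset.range (⌊δ * C⌋₊ + 1), ((1 - δ) / δ) ^ k ≤ S C :=
    fun C => hS C ▸ sum_range_floor_pow_le_sum_prod_one_sub_div hδ0 (by linarith) C
  have hratio : 1 < (1 - δ) / δ := by rw [lt_div_iff₀ hδ0]; linarith
  exact ⟨fun C _ => hbound C,
    tendsto_atTop_mono hbound (tendsto_sum_range_floor_pow_atTop hδ0 hratio)⟩
end

section
/- Fix ν > 1 and a > 1, and set h(z) = 1 + a z(1−z). Define for integer C ≥ 1 and z ∈ [0,1]: Ψ_C(z) = 1 − z·Σ_{k=0}^{C} (∏_{i=0}^{k−1}(1 − i/C)) · (ν h(z))^{−k}. Then Ψ_C converges uniformly on [0,1] to Ψ̄(z) = (ν(1−z)h(z) − 1)/(ν h(z) − 1) as C → ∞. -/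
/-!
Write `q = (ν h(z))⁻¹`, so that `q ∈ [0, ν⁻¹]` with `ν⁻¹ < 1` on `[0,1]`, and
`Ψ̄(z) = 1 - z (1 - q)⁻¹ = 1 - z ∑ₖ qᵏ`. The coefficients `pₖ = ∏_{i<k} (1 - i/C)` satisfy
`|1 - pₖ| ≤ k²/C` by the Weierstrass product inequality, so comparing with the geometric series
gives `|Ψ̄(z) - Ψ_C(z)| ≤ (∑ₖ k² ν⁻ᵏ)/C + ν^{-(C+1)}/(1 - ν⁻¹)`, a bound independent of `z`
that tends to `0`.
-/

open Real Filter Set Topology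

lemma tendstoUniformlyOn_of_dist_le {ι α β : Type*} [PseudoMetricSpace β] {F : ι → α → β}
    {f : α → β} {p : Filter ι} {s : Set α} {b : ι → ℝ} (hb : Tendsto b p (𝓝 0))
    (h : ∀ᶠ n in p, ∀ x ∈ s, dist (f x) (F n x) ≤ b n) : TendstoUniformlyOn F f p s :=
  Metric.tendstoUniformlyOn_iff.2 fun _ hε =>
    (h.and (hb.eventually (gt_mem_nhds hε))).mono fun _ hn x hx => (hn.1 x hx).trans_lt hn.2

lemma Finset.one_sub_sum_le_prod_one_sub {ι R : Type*} [CommRing R] [LinearOrder R]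
    [IsStrictOrderedRing R] (s : Finset ι) {f : ι → R} (h0 : ∀ i ∈ s, 0 ≤ f i)
    (h1 : ∀ i ∈ s, f i ≤ 1) : 1 - ∑ i ∈ s, f i ≤ ∏ i ∈ s, (1 - f i) := by
  induction s using Finset.cons_induction with
  | empty => simp
  | cons a s _ ih =>
    simp only [Finset.mem_cons, forall_eq_or_imp] at h0 h1
    rw [Finset.sum_cons, Finset.prod_cons]
    have hsum : 0 ≤ ∑ i ∈ s, f i := Finset.sum_nonneg h0.2
    nlinarith [ih h0.2 h1.2, mul_le_mul_of_nonneg_left (ih h0.2 h1.2) (sub_nonneg.2 h1.1)]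

lemma abs_one_sub_prod_one_sub_div_le {C k : ℕ} (hk : k ≤ C) :
    |1 - ∏ i ∈ Finset.range k, (1 - (i : ℝ) / C)| ≤ (k : ℝ) ^ 2 / C := by
  have hle : ∀ i ∈ Finset.range k, (i : ℝ) / C ≤ k / C := fun i hi =>
    div_le_div_of_nonneg_right (by exact_mod_cast (Finset.mem_range.1 hi).le) C.cast_nonneg
  have hle_one : ∀ i ∈ Finset.range k, (i : ℝ) / C ≤ 1 := fun i hi =>
    div_le_one_of_le₀ (by exact_mod_cast (Finset.mem_range.1 hi).le.trans hk) C.cast_nonneg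
  have hnonneg : ∀ i ∈ Finset.range k, 0 ≤ (i : ℝ) / C := fun _ _ => by positivity
  have hprod_le : ∏ i ∈ Finset.range k, (1 - (i : ℝ) / C) ≤ 1 :=
    Finset.prod_le_one (fun i hi => sub_nonneg.2 (hle_one i hi))
      (fun i hi => sub_le_self _ (hnonneg i hi))
  rw [abs_of_nonneg (sub_nonneg.2 hprod_le)]
  calc 1 - ∏ i ∈ Finset.range k, (1 - (i : ℝ) / C)
      ≤ ∑ i ∈ Finset.range k, (i : ℝ) / C := by
        linarith [Finset.one_sub_sum_le_prod_one_sub _ hnonneg hle_one]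
    _ ≤ ∑ _i ∈ Finset.range k, (k : ℝ) / C := Finset.sum_le_sum hle
    _ = (k : ℝ) ^ 2 / C := by simp only [Finset.sum_const, Finset.card_range, nsmul_eq_mul]; ring

section TruncatedSeries

variable {q r : ℝ}

lemma inv_one_sub_sub_geom_sum (hq : q ≠ 1) (n : ℕ) :
    (1 - q)⁻¹ - ∑ k ∈ Finset.range n, q ^ k = q ^ n / (1 - q) := by
  have : 1 - q ≠ 0 := sub_ne_zero.2 hq.symm
  rw [geom_sum_eq hq]
  field_simp
  ring

lemma abs_sum_one_sub_prod_mul_pow_le (C : ℕ) (hq0 : 0 ≤ q) (hqr : q ≤ r) (hr : r < 1) :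
    |∑ k ∈ Finset.range (C + 1), (1 - ∏ i ∈ Finset.range k, (1 - (i : ℝ) / C)) * q ^ k|
      ≤ (∑' k : ℕ, (k : ℝ) ^ 2 * r ^ k) / C := by
  have hr0 : 0 ≤ r := hq0.trans hqr
  have hsum : Summable fun k : ℕ => (k : ℝ) ^ 2 * r ^ k :=
    summable_pow_mul_geometric_of_norm_lt_one 2 (by rwa [norm_of_nonneg hr0])
  calc |∑ k ∈ Finset.range (C + 1), (1 - ∏ i ∈ Finset.range k, (1 - (i : ℝ) / C)) * q ^ k|
      ≤ ∑ k ∈ Finset.range (C + 1), (k : ℝ) ^ 2 / C * r ^ k := by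
        refine (Finset.abs_sum_le_sum_abs _ _).trans (Finset.sum_le_sum fun k hk => ?_)
        rw [abs_mul, abs_of_nonneg (pow_nonneg hq0 k)]
        exact mul_le_mul
          (abs_one_sub_prod_one_sub_div_le (Nat.lt_succ_iff.1 (Finset.mem_range.1 hk)))
          (pow_le_pow_left₀ hq0 hqr k) (pow_nonneg hq0 k) (by positivity)
    _ = (∑ k ∈ Finset.range (C + 1), (k : ℝ) ^ 2 * r ^ k) / C := by
        rw [Finset.sum_div]
        exact Finset.sum_congr rfl fun k _ => div_mul_eq_mul_div _ _ _
    _ ≤ (∑' k : ℕ, (k : ℝ) ^ 2 * r ^ k) / C := by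
        gcongr
        exact hsum.sum_le_tsum _ fun k _ => by positivity

lemma abs_inv_one_sub_sub_sum_prod_mul_pow_le (C : ℕ) (hq0 : 0 ≤ q) (hqr : q ≤ r) (hr : r < 1) :
    |(1 - q)⁻¹ - ∑ k ∈ Finset.range (C + 1), (∏ i ∈ Finset.range k, (1 - (i : ℝ) / C)) * q ^ k|
      ≤ (∑' k : ℕ, (k : ℝ) ^ 2 * r ^ k) / C + r ^ (C + 1) / (1 - r) := by
  have hq1 : q < 1 := hqr.trans_lt hr
  have hsplit : (1 - q)⁻¹ - ∑ k ∈ Finset.range (C + 1),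
        (∏ i ∈ Finset.range k, (1 - (i : ℝ) / C)) * q ^ k
      = ∑ k ∈ Finset.range (C + 1), (1 - ∏ i ∈ Finset.range k, (1 - (i : ℝ) / C)) * q ^ k
        + q ^ (C + 1) / (1 - q) := by
    rw [← inv_one_sub_sub_geom_sum hq1.ne]
    simp only [sub_mul, one_mul, Finset.sum_sub_distrib]
    ring
  have htail : q ^ (C + 1) / (1 - q) ≤ r ^ (C + 1) / (1 - r) :=
    div_le_div₀ (by have := hq0.trans hqr; positivity) (pow_le_pow_left₀ hq0 hqr _)
      (by linarith) (by linarith)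
  rw [hsplit]
  refine (abs_add_le _ _).trans (add_le_add (abs_sum_one_sub_prod_mul_pow_le C hq0 hqr hr) ?_)
  rwa [abs_of_nonneg (div_nonneg (pow_nonneg hq0 _) (by linarith))]

lemma tendsto_truncation_bound (hr0 : 0 ≤ r) (hr : r < 1) :
    Tendsto (fun C : ℕ => (∑' k : ℕ, (k : ℝ) ^ 2 * r ^ k) / C + r ^ (C + 1) / (1 - r))
      atTop (𝓝 0) := by
  have htail : Tendsto (fun C : ℕ => r ^ (C + 1) / (1 - r)) atTop (𝓝 0) := by
    simpa using ((tendsto_pow_atTop_nhds_zero_of_lt_one hr0 hr).comp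
      (tendsto_add_atTop_nat 1)).div_const (1 - r)
  simpa using (tendsto_const_div_atTop_nhds_zero_nat _).add htail

end TruncatedSeries

lemma div_sub_one_eq_one_sub_mul_inv_one_sub_inv {H : ℝ} (h0 : H ≠ 0) (h1 : H ≠ 1) (z : ℝ) :
    (H * (1 - z) - 1) / (H - 1) = 1 - z * (1 - H⁻¹)⁻¹ := by
  have : H - 1 ≠ 0 := sub_ne_zero.2 h1
  field_simp
  ring

theorem stmt_14 (ν a : ℝ) (hν : 1 < ν) (ha : 1 < a)
    (h : ℝ → ℝ) (hh : ∀ z : ℝ, h z = 1 + a * z * (1 - z))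
    (Ψ : ℕ → ℝ → ℝ)
    (hΨ : ∀ (C : ℕ) (z : ℝ), Ψ C z = 1 - z * ∑ k ∈ Finset.range (C + 1),
        (∏ i ∈ Finset.range k, (1 - (i : ℝ) / C)) * (ν * h z)⁻¹ ^ k)
    (Ψb : ℝ → ℝ)
    (hΨb : ∀ z : ℝ, Ψb z = (ν * (1 - z) * h z - 1) / (ν * h z - 1)) :
    TendstoUniformlyOn Ψ Ψb atTop (Icc (0 : ℝ) 1) := by
  have hν0 : 0 < ν := by linarith
  refine tendstoUniformlyOn_of_dist_le
    (tendsto_truncation_bound (inv_nonneg.2 hν0.le) (inv_lt_one_of_one_lt₀ hν))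
    (Eventually.of_forall fun C z hz => ?_)
  have hhz : 1 ≤ h z := by
    rw [hh]
    exact le_add_of_nonneg_right (mul_nonneg (mul_nonneg (by linarith) hz.1) (sub_nonneg.2 hz.2))
  have hH : ν ≤ ν * h z := le_mul_of_one_le_right hν0.le hhz
  have hH1 : 1 < ν * h z := hν.trans_le hH
  rw [hΨb, show ν * (1 - z) * h z = ν * h z * (1 - z) by ring,
    div_sub_one_eq_one_sub_mul_inv_one_sub_inv (zero_lt_one.trans hH1).ne' hH1.ne', hΨ,
    Real.dist_eq, show ∀ x y : ℝ, 1 - z * x - (1 - z * y) = z * (y - x) by intros; ring, abs_mul,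
    abs_of_nonneg hz.1, abs_sub_comm]
  exact (mul_le_of_le_one_left (abs_nonneg _) hz.2).trans
    (abs_inv_one_sub_sub_sum_prod_mul_pow_le C (by positivity) (inv_anti₀ hν0 hH)
      (inv_lt_one_of_one_lt₀ hν))
end
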